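/- Let S = [0,1], A a finite nonempty set, H ≥ 1 and n ≥ 1 natural numbers, L > 0, α > 0. Let r : S × A → [0,1] satisfy |r(s,a) − r(s',a)| ≤ L|s − s'|^α for all s, s', a, with s ↦ r(s,a) measurable, and for each (s,a) let μ_{s,a} be a Borel probability measure on S with ‖μ_{s,a} − μ_{s',a}‖_{TV} ≤ L|s − s'|^α for all s, s', a, with t ↦ μ_{t,a}(E) measurable for every Borel E. The state space [0,1] is partitioned into n intervals I_1 = [0, 1/n] and I_j = ((j−1)/n, j/n] for j = 2, …, n; set r^{agg}(I_j, a) = n·∫_{I_j} r(s,a) ds and P^{agg}(I_{j'} | I_j, a) = n·∫_{I_j} μ_{t,a}(I_{j'}) dt, and write I(x) for the index j with x ∈ I_j. Fix a policy π : {1,…,n} × {1,…,H} → A. Let measurable V_1, …, V_{H+1} : S → ℝ satisfy V_{H+1} ≡ 0 and V_h(s) = r(s, π(I(s), h)) + ∫_S V_{h+1} dμ_{s, π(I(s), h)} for 1 ≤ h ≤ H (with the integrals defined), and let W_1, …, W_{H+1} : {1,…,n} → ℝ satisfy W_{H+1} ≡ 0 and W_h(j) = r^{agg}(I_j, π(j,h))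 + ∑_{j'=1}^n P^{agg}(I_{j'} | I_j, π(j,h))·W_{h+1}(j') for 1 ≤ h ≤ H. Then for all 1 ≤ h ≤ H+1, all j ∈ {1,…,n}, and all x ∈ I_j, |V_h(x) − W_h(j)| ≤ (H − h + 1)·(H + 1)·L·n^{−α}. -/

import Mathlib

open MeasureTheory Set

/-- The partition of the state space `[0,1]` into `n` intervals:
`I 1 = [0, 1/n]` and `I j = ((j-1)/n, j/n]` for `j = 2, …, n`. -/
def part (n j : ℕ) : Set ℝ :=
  if j = 1 then Icc 0 (1 / n) else Ioc (((j : ℝ) - 1) / n) ((j : ℝ) / n)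

/-- The aggregate reward `r^{agg}(I_j, a) = n·∫_{I_j} r(s,a) ds`. -/
noncomputable def ragg {A : Type*} (n : ℕ) (r : ℝ → A → ℝ) (j : ℕ) (a : A) : ℝ :=
  n * ∫ s in part n j, r s a

/-- The averaged aggregated transition probability
`P^{agg}(I_{j'} | I_j, a) = n·∫_{I_j} μ_{t,a}(I_{j'}) dt`. -/
noncomputable def Pagg {A : Type*} (n : ℕ) (μ : ℝ → A → Measure ℝ) (a : A)
    (j j' : ℕ) : ℝ :=
  n * ∫ t in part n j, (μ t a (part n j')).toReal

/-- The total variation distance between two finite measures. -/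
noncomputable def tvDist {X : Type*} [MeasurableSpace X]
    (μ ν : Measure X) [IsFiniteMeasure μ] [IsFiniteMeasure ν] : ℝ :=
  ((μ.toSignedMeasure - ν.toSignedMeasure).totalVariation univ).toReal

lemma integrable_of_bdd {X : Type*} [MeasurableSpace X] {μ : Measure X} [IsFiniteMeasure μ]
    {f : X → ℝ} (hf : Measurable f) {M : ℝ} (hM : ∀ x, |f x| ≤ M) : Integrable f μ :=
  (integrable_const M).mono' hf.aestronglyMeasurable
    (Filter.Eventually.of_forall (by simpa [Real.norm_eq_abs] using hM))

lemma integrableOn_of_bdd {X : Type*} [MeasurableSpace X] {μ : Measure X} {E : Set X}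
    (hE : MeasurableSet E) (hfin : μ E ≠ ⊤) {f : X → ℝ} (hf : Measurable f) {M : ℝ}
    (hM : ∀ x ∈ E, |f x| ≤ M) : IntegrableOn f E μ := by
  haveI : IsFiniteMeasure (μ.restrict E) :=
    ⟨by rwa [Measure.restrict_apply_univ, lt_top_iff_ne_top]⟩
  exact (integrable_const M).mono' hf.aestronglyMeasurable
    ((ae_restrict_iff' hE).mpr (Filter.Eventually.of_forall fun x hx => by
      simpa [Real.norm_eq_abs] using hM x hx))

lemma abs_integral_sub_le_tvDist {X : Type*} [MeasurableSpace X] (μ ν : Measure X)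
    [IsFiniteMeasure μ] [IsFiniteMeasure ν]
    {f : X → ℝ} (hf : Measurable f) {M : ℝ} (hM : ∀ x, |f x| ≤ M) :
    |∫ x, f x ∂μ - ∫ x, f x ∂ν| ≤ M * tvDist μ ν := by
  set s : SignedMeasure X := μ.toSignedMeasure - ν.toSignedMeasure with hs
  set p := s.toJordanDecomposition.posPart with hp
  set q := s.toJordanDecomposition.negPart with hq
  have hkey : μ + q = ν + p := by
    ext E hE
    have h1 : s E = (μ E).toReal - (ν E).toReal := Measure.toSignedMeasure_sub_apply hE
    have h2 : s E = (p E).toReal - (q E).toReal := by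
      conv_lhs => rw [← s.toSignedMeasure_toJordanDecomposition]
      rw [JordanDecomposition.toSignedMeasure]
      exact Measure.toSignedMeasure_sub_apply hE
    have h3 : (μ E).toReal + (q E).toReal = (ν E).toReal + (p E).toReal := by
      linarith [h1, h2]
    have h4 : ((μ + q) E).toReal = ((ν + p) E).toReal := by
      rw [Measure.add_apply, Measure.add_apply, ENNReal.toReal_add (measure_ne_top _ _)
        (measure_ne_top _ _), ENNReal.toReal_add (measure_ne_top _ _) (measure_ne_top _ _), h3]
    exact (ENNReal.toReal_eq_toReal_iff' (measure_ne_top _ _) (measure_ne_top _ _)).mp h4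
  have hiμ : Integrable f μ := integrable_of_bdd hf hM
  have hiν : Integrable f ν := integrable_of_bdd hf hM
  have hip : Integrable f p := integrable_of_bdd hf hM
  have hiq : Integrable f q := integrable_of_bdd hf hM
  have hsum : ∫ x, f x ∂μ + ∫ x, f x ∂q = ∫ x, f x ∂ν + ∫ x, f x ∂p := by
    rw [← integral_add_measure hiμ hiq, ← integral_add_measure hiν hip, hkey]
  have hdiff : ∫ x, f x ∂μ - ∫ x, f x ∂ν = ∫ x, f x ∂p - ∫ x, f x ∂q := by linarith
  have hbp : |∫ x, f x ∂p| ≤ M * (p univ).toReal := by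
    simpa [Real.norm_eq_abs, measureReal_def] using norm_integral_le_of_norm_le_const (μ := p) (f := f) (C := M)
      (Filter.Eventually.of_forall (by simpa [Real.norm_eq_abs] using hM))
  have hbq : |∫ x, f x ∂q| ≤ M * (q univ).toReal := by
    simpa [Real.norm_eq_abs, measureReal_def] using norm_integral_le_of_norm_le_const (μ := q) (f := f) (C := M)
      (Filter.Eventually.of_forall (by simpa [Real.norm_eq_abs] using hM))
  have htv : tvDist μ ν = (p univ).toReal + (q univ).toReal := by
    rw [tvDist, ← hs, SignedMeasure.totalVariation, Measure.add_apply,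
      ENNReal.toReal_add (measure_ne_top _ _) (measure_ne_top _ _)]
  rw [hdiff, htv]
  calc |∫ x, f x ∂p - ∫ x, f x ∂q| ≤ |∫ x, f x ∂p| + |∫ x, f x ∂q| := abs_sub _ _
    _ ≤ M * (p univ).toReal + M * (q univ).toReal := add_le_add hbp hbq
    _ = M * ((p univ).toReal + (q univ).toReal) := by ring

lemma measurableSet_part (n j : ℕ) : MeasurableSet (part n j) := by
  unfold part; split
  · exact measurableSet_Icc
  · exact measurableSet_Ioc

lemma part_mem_le {n j : ℕ} {x : ℝ} (hx : x ∈ part n j) : x ≤ (j : ℝ) / n := by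
  unfold part at hx; split at hx
  · rename_i h; subst h; simpa using hx.2
  · exact hx.2

lemma part_mem_gt {n j : ℕ} (hj : j ≠ 1) {x : ℝ} (hx : x ∈ part n j) :
    ((j : ℝ) - 1) / n < x := by
  unfold part at hx; rw [if_neg hj] at hx; exact hx.1

lemma part_mem_nonneg {n j : ℕ} (hn : 1 ≤ n) (hj : 1 ≤ j) {x : ℝ} (hx : x ∈ part n j) :
    0 ≤ x := by
  have hn0 : (0:ℝ) < n := by exact_mod_cast hn
  by_cases h1 : j = 1
  · subst h1; unfold part at hx; simpa using hx.1
  · have h2 : (2:ℕ) ≤ j := by omega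
    have hgt : ((j:ℝ) - 1) / n < x := part_mem_gt h1 hx
    have hge : (0:ℝ) ≤ ((j:ℝ) - 1) / n := by
      apply div_nonneg _ hn0.le
      have : (2:ℝ) ≤ j := by exact_mod_cast h2
      linarith
    linarith

lemma part_subset {n j : ℕ} (hn : 1 ≤ n) (hj : 1 ≤ j) (hjn : j ≤ n) :
    part n j ⊆ Icc (0:ℝ) 1 := by
  intro x hx
  have hn0 : (0:ℝ) < n := by exact_mod_cast hn
  refine ⟨part_mem_nonneg hn hj hx, ?_⟩
  have h1 : x ≤ (j : ℝ) / n := part_mem_le hx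
  have h2 : (j : ℝ) ≤ n := by exact_mod_cast hjn
  calc x ≤ (j : ℝ) / n := h1
    _ ≤ (n : ℝ) / n := by gcongr
    _ = 1 := div_self hn0.ne'

lemma part_diam {n j : ℕ} (hn : 1 ≤ n) (hj : 1 ≤ j) {x t : ℝ}
    (hx : x ∈ part n j) (ht : t ∈ part n j) : |x - t| ≤ 1 / n := by
  have hn0 : (0:ℝ) < n := by exact_mod_cast hn
  rw [abs_sub_le_iff]
  by_cases h1 : j = 1
  · subst h1
    unfold part at hx ht
    simp only [if_pos rfl, mem_Icc, Nat.cast_one] at hx ht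
    constructor <;> linarith [hx.1, hx.2, ht.1, ht.2]
  · have hxg := part_mem_gt h1 hx
    have htg := part_mem_gt h1 ht
    have hxl := part_mem_le hx
    have htl := part_mem_le ht
    have key : (j:ℝ)/n - ((j:ℝ)-1)/n = 1/n := by field_simp; ring
    constructor <;> linarith

lemma volume_part {n j : ℕ} (hn : 1 ≤ n) (hj : 1 ≤ j) :
    volume (part n j) = ENNReal.ofReal (1 / n) := by
  have hn0 : (0:ℝ) < n := by exact_mod_cast hn
  by_cases h1 : j = 1
  · subst h1; unfold part; rw [if_pos rfl, Real.volume_Icc]; norm_num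
  · unfold part; rw [if_neg h1, Real.volume_Ioc]
    congr 1; field_simp; ring

lemma part_disjoint {n : ℕ} (hn : 1 ≤ n) :
    Set.Pairwise ↑(Finset.Icc 1 n) (Function.onFun Disjoint (part n)) := by
  have hn0 : (0:ℝ) < n := by exact_mod_cast hn
  have key : ∀ j j' : ℕ, 1 ≤ j → j < j' → Disjoint (part n j) (part n j') := by
    intro j j' hj hlt
    rw [Set.disjoint_left]
    intro x hx hx'
    have h1 : x ≤ (j:ℝ)/n := part_mem_le hx
    have h2 : ((j':ℝ) - 1)/n < x := part_mem_gt (by omega) hx'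
    have h3 : (j:ℝ) ≤ (j':ℝ) - 1 := by
      have : (j:ℝ) + 1 ≤ j' := by exact_mod_cast hlt
      linarith
    have : (j:ℝ)/n ≤ ((j':ℝ)-1)/n := by gcongr
    linarith
  intro j hj j' hj' hne
  simp only [Finset.coe_Icc, mem_Icc] at hj hj'
  rcases lt_or_gt_of_ne hne with h | h
  · exact key j j' hj.1 h
  · exact (key j' j hj'.1 h).symm

lemma part_cover {n : ℕ} (hn : 1 ≤ n) :
    Icc (0:ℝ) 1 = ⋃ j ∈ Finset.Icc 1 n, part n j := by
  have hn0 : (0:ℝ) < n := by exact_mod_cast hn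
  apply Set.Subset.antisymm
  · intro x hx
    simp only [mem_iUnion, exists_prop]
    by_cases h1 : x ≤ 1 / n
    · exact ⟨1, by simp [Finset.mem_Icc, hn], by unfold part; rw [if_pos rfl]; exact ⟨hx.1, h1⟩⟩
    · push_neg at h1
      set j := ⌈(n:ℝ) * x⌉₊ with hjdef
      have hnx1 : 1 < (n:ℝ) * x := by
        rw [div_lt_iff₀ hn0] at h1; linarith
      have hj2 : 2 ≤ j := by
        have : 1 < j := by exact_mod_cast Nat.lt_ceil.mpr (by exact_mod_cast hnx1)
        omega
      have hjn : j ≤ n := Nat.ceil_le.mpr (by nlinarith [hx.2])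
      refine ⟨j, by simp [Finset.mem_Icc]; omega, ?_⟩
      unfold part
      rw [if_neg (by omega)]
      constructor
      · rw [div_lt_iff₀ hn0]
        have := Nat.ceil_lt_add_one (by nlinarith : (0:ℝ) ≤ (n:ℝ) * x)
        rw [← hjdef] at this
        linarith
      · rw [le_div_iff₀ hn0]
        have := Nat.le_ceil ((n:ℝ) * x)
        rw [← hjdef] at this
        linarith
  · intro x hx
    simp only [mem_iUnion, exists_prop] at hx
    obtain ⟨j, hj, hxj⟩ := hx
    simp only [Finset.mem_Icc] at hj
    exact part_subset hn hj.1 hj.2 hxj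

/-- The `q₂` term of Lemma 1 (constant corrected for error propagation over the
horizon): for a policy `π` depending only on the interval `I(x)` containing the
state and on the step `h`, the value function `V_h` of `π` in the continuous MDP
and the value function `W_h` of the aggregated policy in the discretized MDP
satisfy `|V_h(x) − W_h(j)| ≤ (H − h + 1)·(H + 1)·L·n^(−α)` for `x ∈ I_j`. -/
theorem policy_value_discretization_error {A : Type*} [Fintype A] [Nonempty A]
    (H n : ℕ) (hH : 1 ≤ H) (hn : 1 ≤ n) (L α : ℝ) (hL : 0 < L) (hα : 0 < α)
    (r : ℝ → A → ℝ) (hrange : ∀ s ∈ Icc (0:ℝ) 1, ∀ a : A, r s a ∈ Icc (0:ℝ) 1)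
    (hrmeas : ∀ a : A, Measurable fun s => r s a)
    (hrHolder : ∀ s ∈ Icc (0:ℝ) 1, ∀ s' ∈ Icc (0:ℝ) 1, ∀ a : A,
      |r s a - r s' a| ≤ L * |s - s'| ^ α)
    (μ : ℝ → A → Measure ℝ) [∀ s a, IsProbabilityMeasure (μ s a)]
    (hsupp : ∀ s a, μ s a (Icc 0 1) = 1)
    (hμmeas : ∀ (a : A) (E : Set ℝ), MeasurableSet E →
      Measurable fun t => (μ t a E).toReal)
    (hμHolder : ∀ s ∈ Icc (0:ℝ) 1, ∀ s' ∈ Icc (0:ℝ) 1, ∀ a : A,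
      tvDist (μ s a) (μ s' a) ≤ L * |s - s'| ^ α)
    (idx : ℝ → ℕ) (hidx : ∀ j ∈ Finset.Icc 1 n, ∀ x ∈ part n j, idx x = j)
    (π : ℕ → ℕ → A)
    (V : ℕ → ℝ → ℝ) (hVmeas : ∀ h, Measurable (V h))
    (hVtop : ∀ s, V (H + 1) s = 0)
    (hVint : ∀ h, 1 ≤ h → h ≤ H → ∀ s ∈ Icc (0:ℝ) 1, ∀ a : A,
      IntegrableOn (V (h + 1)) (Icc 0 1) (μ s a))
    (hVpolicy : ∀ h, 1 ≤ h → h ≤ H → ∀ s ∈ Icc (0:ℝ) 1,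
      V h s = r s (π (idx s) h) +
        ∫ s' in Icc (0:ℝ) 1, V (h + 1) s' ∂(μ s (π (idx s) h)))
    (W : ℕ → ℕ → ℝ) (hWtop : ∀ j, W (H + 1) j = 0)
    (hWpolicy : ∀ h, 1 ≤ h → h ≤ H → ∀ j ∈ Finset.Icc 1 n,
      W h j = ragg n r j (π j h) +
        ∑ j' ∈ Finset.Icc 1 n, Pagg n μ (π j h) j j' * W (h + 1) j') :
    ∀ h, 1 ≤ h → h ≤ H + 1 → ∀ j ∈ Finset.Icc 1 n, ∀ x ∈ part n j,
      |V h x - W h j| ≤ ((H : ℝ) - h + 1) * ((H : ℝ) + 1) * L * (n : ℝ) ^ (-α) := by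
  have hnR : (0:ℝ) < n := by exact_mod_cast hn
  have hnpow : (0:ℝ) < (n : ℝ) ^ (-α) := Real.rpow_pos_of_pos hnR _
  have hpow : ∀ {y : ℝ}, |y| ≤ 1/(n:ℝ) → L * |y| ^ α ≤ L * (n:ℝ) ^ (-α) := by
    intro y hy
    have h1 : |y| ^ α ≤ (1/(n:ℝ)) ^ α := Real.rpow_le_rpow (abs_nonneg _) hy hα.le
    have h2 : (1/(n:ℝ)) ^ α = (n:ℝ) ^ (-α) := by
      rw [Real.rpow_neg hnR.le, one_div, Real.inv_rpow hnR.le]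
    exact mul_le_mul_of_nonneg_left (h2 ▸ h1) hL.le
  -- Bound on the value function
  have Vbd : ∀ d m, 1 ≤ m → m + d = H + 1 → ∀ s ∈ Icc (0:ℝ) 1,
      |V m s| ≤ (H:ℝ) + 1 - m := by
    intro d
    induction d with
    | zero =>
      intro m hm1 hm s hs
      have hmeq : m = H + 1 := by omega
      subst hmeq
      rw [hVtop]
      push_cast
      simp
    | succ d ih =>
      intro m hm1 hm s hs
      have hmH : m ≤ H := by omega
      rw [hVpolicy m hm1 hmH s hs]
      set a := π (idx s) m with ha
      have hr := hrange s hs a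
      simp only [mem_Icc] at hr
      have hb : ∀ s' ∈ Icc (0:ℝ) 1, |V (m+1) s'| ≤ (H:ℝ) - m := by
        intro s' hs'
        have := ih (m+1) (by omega) (by omega) s' hs'
        push_cast at this ⊢
        linarith
      have hint := norm_integral_le_of_norm_le_const (μ := (μ s a).restrict (Icc (0:ℝ) 1))
        (f := V (m+1)) (C := (H:ℝ) - m)
        ((ae_restrict_iff' measurableSet_Icc).mpr (Filter.Eventually.of_forall fun s' hs' => by
          rw [Real.norm_eq_abs]; exact hb s' hs'))
      rw [Real.norm_eq_abs, measureReal_restrict_apply_univ, measureReal_def, hsupp s a] at hint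
      simp only [ENNReal.toReal_one, mul_one] at hint
      have h1 : |r s a| ≤ 1 := abs_le.mpr ⟨by linarith [hr.1], hr.2⟩
      have habs := abs_add_le (r s a) (∫ s' in Icc (0:ℝ) 1, V (m+1) s' ∂(μ s a))
      linarith
  -- Main downward induction
  have main : ∀ d h, 1 ≤ h → h + d = H + 1 → ∀ j ∈ Finset.Icc 1 n, ∀ x ∈ part n j,
      |V h x - W h j| ≤ ((H : ℝ) - h + 1) * ((H : ℝ) + 1) * L * (n : ℝ) ^ (-α) := by
    intro d
    induction d with
    | zero =>
      intro h hh1 hhd j hj x hx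
      have hheq : h = H + 1 := by omega
      subst hheq
      rw [hVtop, hWtop]
      have hz : ((H:ℝ) - (↑(H+1):ℝ) + 1) = 0 := by push_cast; ring
      rw [hz]
      simp
    | succ d ih =>
      intro h hh1 hhd j hj x hx
      obtain ⟨hj1, hjn⟩ := Finset.mem_Icc.mp hj
      have hhH : h ≤ H := by omega
      have hxI : x ∈ Icc (0:ℝ) 1 := part_subset hn hj1 hjn hx
      have hidxx : idx x = j := hidx j hj x hx
      have hvol : volume (part n j) = ENNReal.ofReal (1/n) := volume_part hn hj1
      have hvolR : (volume (part n j)).toReal = 1/n := by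
        rw [hvol, ENNReal.toReal_ofReal (by positivity)]
      have hvolfin : volume (part n j) ≠ ⊤ := by rw [hvol]; exact ENNReal.ofReal_ne_top
      haveI hfinres : IsFiniteMeasure (volume.restrict (part n j)) :=
        ⟨by rw [Measure.restrict_apply_univ, hvol]; exact ENNReal.ofReal_lt_top⟩
      set a := π j h with ha
      rw [hVpolicy h hh1 hhH x hxI, hidxx, ← ha, hWpolicy h hh1 hhH j hj, ← ha]
      set M : ℝ := (H:ℝ) - h with hM
      have hMnn : 0 ≤ M := by
        rw [hM]
        have : (h:ℝ) ≤ H := by exact_mod_cast hhH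
        linarith
      have hMbd : ∀ s ∈ Icc (0:ℝ) 1, |V (h+1) s| ≤ M := by
        intro s hs
        have := Vbd d (h+1) (by omega) (by omega) s hs
        rw [hM]; push_cast at this ⊢; linarith
      set δ : ℝ := ((H:ℝ) - (↑(h+1):ℝ) + 1) * ((H:ℝ) + 1) * L * (n:ℝ) ^ (-α) with hδ
      have hδeq : δ = M * (((H:ℝ) + 1) * (L * (n:ℝ) ^ (-α))) := by
        rw [hδ, hM]; push_cast; ring
      have hδnn : 0 ≤ δ := by
        rw [hδeq]; positivity
      have hmle1 : ∀ (t : ℝ) (E : Set ℝ), ((μ t a) E).toReal ≤ 1 := fun t E => by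
        simpa using ENNReal.toReal_mono ENNReal.one_ne_top prob_le_one
      -- Reward term
      have hrIntOn : IntegrableOn (fun s => r s a) (part n j) volume :=
        integrableOn_of_bdd (measurableSet_part n j) hvolfin (hrmeas a)
          (fun s hs => by
            have := hrange s (part_subset hn hj1 hjn hs) a
            simp only [mem_Icc] at this
            exact abs_le.mpr ⟨by linarith [this.1], this.2⟩)
      have hrew : |r x a - ragg n r j a| ≤ L * (n:ℝ) ^ (-α) := by
        have hsub : r x a - ragg n r j a = n * ∫ s in part n j, (r x a - r s a) := by
          rw [integral_sub (integrableOn_const (C := r x a) hvolfin)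
            hrIntOn, setIntegral_const, smul_eq_mul, measureReal_def, hvolR, ragg]
          field_simp
        have hib := norm_integral_le_of_norm_le_const (μ := volume.restrict (part n j))
          (f := fun s => r x a - r s a) (C := L * (n:ℝ) ^ (-α))
          ((ae_restrict_iff' (measurableSet_part n j)).mpr (Filter.Eventually.of_forall
            fun s hs => by
              rw [Real.norm_eq_abs]
              exact le_trans (hrHolder x hxI s (part_subset hn hj1 hjn hs) a)
                (hpow (part_diam hn hj1 hx hs))))
        rw [Real.norm_eq_abs, measureReal_restrict_apply_univ, measureReal_def, hvolR] at hib
        rw [hsub, abs_mul, abs_of_nonneg hnR.le]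
        calc (n:ℝ) * |∫ s in part n j, (r x a - r s a)|
            ≤ (n:ℝ) * (L * (n:ℝ) ^ (-α) * (1/n)) := by
              exact mul_le_mul_of_nonneg_left hib hnR.le
          _ = L * (n:ℝ) ^ (-α) := by field_simp
      -- F and g
      set F : ℝ → ℝ := fun t => ∫ s' in Icc (0:ℝ) 1, V (h+1) s' ∂(μ t a) with hF
      set g : ℝ → ℝ := fun t =>
        ∑ j' ∈ Finset.Icc 1 n, ((μ t a) (part n j')).toReal * W (h+1) j' with hg
      have hsummandInt : ∀ j' ∈ Finset.Icc 1 n,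
          IntegrableOn (fun t => ((μ t a) (part n j')).toReal * W (h+1) j')
            (part n j) volume := by
        intro j' _
        exact integrableOn_of_bdd (measurableSet_part n j) hvolfin
          ((hμmeas a _ (measurableSet_part n j')).mul_const _)
          (M := |W (h+1) j'|) (fun t _ => by
            rw [abs_mul, abs_of_nonneg ENNReal.toReal_nonneg]
            calc ((μ t a) (part n j')).toReal * |W (h+1) j'|
                ≤ 1 * |W (h+1) j'| :=
                  mul_le_mul_of_nonneg_right (hmle1 t _) (abs_nonneg _)
              _ = |W (h+1) j'| := one_mul _)
      have hgint : IntegrableOn g (part n j) volume := by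
        rw [hg]
        exact integrable_finset_sum _ hsummandInt
      -- the aggregated transition sum as an integral of g
      have hsum_eq : ∑ j' ∈ Finset.Icc 1 n, Pagg n μ a j j' * W (h + 1) j'
          = n * ∫ t in part n j, g t := by
        have hterm : ∀ j' ∈ Finset.Icc 1 n, Pagg n μ a j j' * W (h+1) j'
            = n * ∫ t in part n j, ((μ t a) (part n j')).toReal * W (h+1) j' := by
          intro j' _
          rw [Pagg, mul_assoc]
          congr 1
          rw [← smul_eq_mul (a := ∫ t in part n j, ((μ t a) (part n j')).toReal),
            ← integral_smul_const]
          simp [smul_eq_mul]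
        rw [Finset.sum_congr rfl hterm, ← Finset.mul_sum]
        congr 1
        rw [← integral_finset_sum _ hsummandInt]
      -- TV bound between F x and F t
      have hind_meas : Measurable (Set.indicator (Icc (0:ℝ) 1) (V (h+1))) :=
        (hVmeas (h+1)).indicator measurableSet_Icc
      have hind_bd : ∀ s, |Set.indicator (Icc (0:ℝ) 1) (V (h+1)) s| ≤ M := by
        intro s
        by_cases hs : s ∈ Icc (0:ℝ) 1
        · rw [Set.indicator_of_mem hs]; exact hMbd s hs
        · rw [Set.indicator_of_notMem hs]; simpa using hMnn
      have hFF : ∀ t ∈ part n j, |F x - F t| ≤ M * (L * (n:ℝ) ^ (-α)) := by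
        intro t ht
        have htI : t ∈ Icc (0:ℝ) 1 := part_subset hn hj1 hjn ht
        have hFx : F x = ∫ s', Set.indicator (Icc (0:ℝ) 1) (V (h+1)) s' ∂(μ x a) :=
          (integral_indicator measurableSet_Icc).symm
        have hFt : F t = ∫ s', Set.indicator (Icc (0:ℝ) 1) (V (h+1)) s' ∂(μ t a) :=
          (integral_indicator measurableSet_Icc).symm
        rw [hFx, hFt]
        calc |(∫ s', Set.indicator (Icc (0:ℝ) 1) (V (h+1)) s' ∂(μ x a)) -
              ∫ s', Set.indicator (Icc (0:ℝ) 1) (V (h+1)) s' ∂(μ t a)|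
            ≤ M * tvDist (μ x a) (μ t a) :=
              abs_integral_sub_le_tvDist _ _ hind_meas hind_bd
          _ ≤ M * (L * |x - t| ^ α) :=
              mul_le_mul_of_nonneg_left (hμHolder x hxI t htI a) hMnn
          _ ≤ M * (L * (n:ℝ) ^ (-α)) :=
              mul_le_mul_of_nonneg_left (hpow (part_diam hn hj1 hx ht)) hMnn
      -- discretization bound between F t and g t
      have hFg : ∀ t ∈ part n j, |F t - g t| ≤ δ := by
        intro t ht
        have htI : t ∈ Icc (0:ℝ) 1 := part_subset hn hj1 hjn ht
        have hVintt : IntegrableOn (V (h+1)) (Icc (0:ℝ) 1) (μ t a) := hVint h hh1 hhH t htI a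
        have hsplit : F t = ∑ j' ∈ Finset.Icc 1 n, ∫ s' in part n j', V (h+1) s' ∂(μ t a) := by
          rw [hF]
          simp only
          rw [part_cover hn]
          exact integral_biUnion_finset _ (fun j' _ => measurableSet_part n j')
            (part_disjoint hn) (fun j' hj' => by
              obtain ⟨h1, h2⟩ := Finset.mem_Icc.mp hj'
              exact hVintt.mono_set (part_subset hn h1 h2))
        have htermb : ∀ j' ∈ Finset.Icc 1 n,
            |(∫ s' in part n j', V (h+1) s' ∂(μ t a)) -
              ((μ t a) (part n j')).toReal * W (h+1) j'|
            ≤ δ * ((μ t a) (part n j')).toReal := by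
          intro j' hj'
          obtain ⟨hj'1, hj'n⟩ := Finset.mem_Icc.mp hj'
          have hWc : ((μ t a) (part n j')).toReal * W (h+1) j'
              = ∫ _ in part n j', W (h+1) j' ∂(μ t a) := by
            rw [setIntegral_const, smul_eq_mul, measureReal_def]
          rw [hWc, ← integral_sub (hVintt.mono_set (part_subset hn hj'1 hj'n))
            (integrableOn_const (measure_ne_top _ _))]
          have hib := norm_integral_le_of_norm_le_const
            (μ := (μ t a).restrict (part n j'))
            (f := fun s' => V (h+1) s' - W (h+1) j') (C := δ)
            ((ae_restrict_iff' (measurableSet_part n j')).mpr (Filter.Eventually.of_forall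
              fun s' hs' => by
                rw [Real.norm_eq_abs]
                exact ih (h+1) (by omega) (by omega) j' hj' s' hs'))
          rwa [Real.norm_eq_abs, measureReal_restrict_apply_univ, measureReal_def] at hib
        have hsum1 : ∑ j' ∈ Finset.Icc 1 n, ((μ t a) (part n j')).toReal = 1 := by
          have hU : (μ t a) (⋃ j' ∈ Finset.Icc 1 n, part n j')
              = ∑ j' ∈ Finset.Icc 1 n, (μ t a) (part n j') :=
            measure_biUnion_finset (part_disjoint hn) (fun j' _ => measurableSet_part n j')
          rw [← part_cover hn, hsupp t a] at hU
          have := congrArg ENNReal.toReal hU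
          rw [ENNReal.toReal_sum (fun j' _ => measure_ne_top _ _)] at this
          simpa using this.symm
        have hdiff : F t - g t = ∑ j' ∈ Finset.Icc 1 n,
            ((∫ s' in part n j', V (h+1) s' ∂(μ t a)) -
              ((μ t a) (part n j')).toReal * W (h+1) j') := by
          rw [hsplit, hg, Finset.sum_sub_distrib]
        rw [hdiff]
        calc |∑ j' ∈ Finset.Icc 1 n, _| ≤ ∑ j' ∈ Finset.Icc 1 n,
              |(∫ s' in part n j', V (h+1) s' ∂(μ t a)) -
                ((μ t a) (part n j')).toReal * W (h+1) j'| :=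
              Finset.abs_sum_le_sum_abs _ _
          _ ≤ ∑ j' ∈ Finset.Icc 1 n, δ * ((μ t a) (part n j')).toReal :=
              Finset.sum_le_sum htermb
          _ = δ * ∑ j' ∈ Finset.Icc 1 n, ((μ t a) (part n j')).toReal := by
              rw [Finset.mul_sum]
          _ = δ := by rw [hsum1, mul_one]
      -- combine the two for each t
      have hcomb : ∀ t ∈ part n j, |F x - g t| ≤ M * (L * (n:ℝ) ^ (-α)) + δ := by
        intro t ht
        calc |F x - g t| ≤ |F x - F t| + |F t - g t| := abs_sub_le _ _ _
          _ ≤ M * (L * (n:ℝ) ^ (-α)) + δ := add_le_add (hFF t ht) (hFg t ht)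
      -- transition term bound
      have htrans : |F x - n * ∫ t in part n j, g t| ≤ M * (L * (n:ℝ) ^ (-α)) + δ := by
        have hsub : F x - n * ∫ t in part n j, g t
            = n * ∫ t in part n j, (F x - g t) := by
          rw [integral_sub (integrableOn_const (C := F x) hvolfin)
            hgint, setIntegral_const, smul_eq_mul, measureReal_def, hvolR]
          field_simp
        have hib := norm_integral_le_of_norm_le_const (μ := volume.restrict (part n j))
          (f := fun t => F x - g t) (C := M * (L * (n:ℝ) ^ (-α)) + δ)
          ((ae_restrict_iff' (measurableSet_part n j)).mpr (Filter.Eventually.of_forall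
            fun t ht => by rw [Real.norm_eq_abs]; exact hcomb t ht))
        rw [Real.norm_eq_abs, measureReal_restrict_apply_univ, measureReal_def, hvolR] at hib
        rw [hsub, abs_mul, abs_of_nonneg hnR.le]
        calc (n:ℝ) * |∫ t in part n j, (F x - g t)|
            ≤ (n:ℝ) * ((M * (L * (n:ℝ) ^ (-α)) + δ) * (1/n)) :=
              mul_le_mul_of_nonneg_left hib hnR.le
          _ = M * (L * (n:ℝ) ^ (-α)) + δ := by field_simp
      -- assemble
      rw [hsum_eq]
      have hsplit2 : r x a + F x - (ragg n r j a + n * ∫ t in part n j, g t)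
          = (r x a - ragg n r j a) + (F x - n * ∫ t in part n j, g t) := by ring
      calc |r x a + F x - (ragg n r j a + n * ∫ t in part n j, g t)|
          ≤ |r x a - ragg n r j a| + |F x - n * ∫ t in part n j, g t| := by
            rw [hsplit2]; exact abs_add_le _ _
        _ ≤ L * (n:ℝ) ^ (-α) + (M * (L * (n:ℝ) ^ (-α)) + δ) := add_le_add hrew htrans
        _ ≤ ((H : ℝ) - h + 1) * ((H : ℝ) + 1) * L * (n : ℝ) ^ (-α) := by
            rw [hδeq, hM]
            have h1R : (1:ℝ) ≤ h := by exact_mod_cast hh1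
            have hHR : (h:ℝ) ≤ H := by exact_mod_cast hhH
            nlinarith [mul_pos hL hnpow]
  intro h hh1 hh2 j hj x hx
  exact main (H + 1 - h) h hh1 (by omega) j hj x hx
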